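/- arXiv:2006.13988 — 2 statements merged into one kernel-verified Lean document; each statement's English description precedes it below -/
import Mathlib

section
/- Fix α with 0<α<β_1, and for n∈ℕ define φ_n:X→ℝ by φ_n(x)=c_n−δ_j when dist(x,X_n)=2^{-j} (with φ_n(x)=c_n when x∈X_n), where δ_j=(10+3 log₂ j)/(α j) and δ_∞=0. Then φ(x)=sup_n φ_n(x) defines a continuous function on X. -/
open MeasureTheory Real Filter Topology

noncomputable section

namespace PhaseTransitions

/-! ### Measure-theoretic entropy and topological pressure -/

/-- Base-2 entropy of the (finite, measurable) partition of `X` induced by an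
observable `f : X → F` with finitely many values. -/
def entOfObs {X F : Type*} [MeasurableSpace X] [Fintype F]
    (μ : Measure X) (f : X → F) : ℝ :=
  ∑ a : F, -((μ (f ⁻¹' {a})).toReal * Real.logb 2 (μ (f ⁻¹' {a})).toReal)

/-- Entropy of the transformation `T` with respect to the partition induced by
the observable `f` : the limit (= infimum) of `(1/n) H(⋁_{i<n} T⁻ⁱ f)`. -/
def entObsT {X F : Type*} [MeasurableSpace X] [Fintype F]
    (T : X → X) (μ : Measure X) (f : X → F) : ℝ :=
  ⨅ n : ℕ, entOfObs μ (fun x => fun i : Fin (n + 1) => f (T^[(i : ℕ)] x)) / (n + 1)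

/-- Kolmogorov–Sinai (measure-theoretic) entropy, base 2: supremum over all
finite measurable partitions (encoded by observables with values in `Fin k`). -/
def kolSinai {X : Type*} [MeasurableSpace X] (T : X → X) (μ : Measure X) : ℝ :=
  ⨆ k : ℕ, ⨆ f : {f : X → Fin k // Measurable f}, entObsT T μ f.1

/-- `μ` is a `T`-invariant Borel probability measure. -/
def InvProb {X : Type*} [MeasurableSpace X] (T : X → X) (μ : Measure X) : Prop :=
  IsProbabilityMeasure μ ∧ MeasurePreserving T μ μ

/-- Topological pressure, via the variational principle. -/
def pressure {X : Type*} [MeasurableSpace X] (T : X → X) (φ : X → ℝ) : ℝ :=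
  ⨆ μ : {μ : Measure X // InvProb T μ}, (kolSinai T μ.1 + ∫ x, φ x ∂μ.1)

/-- An equilibrium state of the potential `φ`: an invariant probability measure
attaining the supremum in the variational principle. -/
def IsEquilibrium {X : Type*} [MeasurableSpace X] (T : X → X) (φ : X → ℝ)
    (μ : Measure X) : Prop :=
  InvProb T μ ∧ kolSinai T μ + ∫ x, φ x ∂μ = pressure T φ

/-! ### The two-sided full shift on two symbols -/

/-- The two-sided full shift space `{0,1}^ℤ`. -/
abbrev Bin : Type := ℤ → Bool

/-- The (left) shift map. -/
def shift (x : Bin) : Bin := fun n => x (n + 1)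

/-- `x` is a bi-infinite free concatenation of words from `W`: there is a
bi-infinite increasing sequence of cut points, cofinal in both directions, such
that consecutive cut points delimit words of `W`. -/
def IsFreeConcat (W : Set (List Bool)) (x : Bin) : Prop :=
  ∃ t : ℤ → ℤ, StrictMono t ∧ (∀ N : ℤ, ∃ k, N < t k) ∧ (∀ N : ℤ, ∃ k, t k < N) ∧
    ∀ k : ℤ, ∃ w ∈ W, t (k + 1) = t k + w.length ∧
      ∀ (i : ℕ) (h : i < w.length), x (t k + (i : ℤ)) = w.get ⟨i, h⟩

/-- The coded system generated by the word set `W`: the closure of the set of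
free concatenations of words from `W`. -/
def codedSystem (W : Set (List Bool)) : Set Bin :=
  closure {x | IsFreeConcat W x}

/-- The generating set `W_n = {0^{2^n-1}1, 1^{2^n-1}0}`. -/
def genWords (n : ℕ) : Set (List Bool) :=
  {List.replicate (2 ^ n - 1) false ++ [true], List.replicate (2 ^ n - 1) true ++ [false]}

/-- The subshift `X_n`, the coded system generated by `W_n`. -/
def Xsub (n : ℕ) : Set Bin := codedSystem (genWords n)

/-- The set of words of length `j` in the language of `Y ⊆ {0,1}^ℤ`. -/
def langWord (Y : Set Bin) (j : ℕ) : Set (Fin j → Bool) :=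
  {w | ∃ x ∈ Y, ∀ i : Fin j, x ((i : ℕ) : ℤ) = w i}

/-! ### The metric and the potential -/

open Classical in
/-- The metric `d(x,y) = 2^{-inf{|n| : x_n ≠ y_n}}` on the shift space. -/
def binDist (x y : Bin) : ℝ :=
  if x = y then 0
  else (1 / 2 : ℝ) ^ sInf {m : ℕ | ∃ i : ℤ, i.natAbs = m ∧ x i ≠ y i}

/-- Distance from a point to a set. -/
def distToSet (x : Bin) (S : Set Bin) : ℝ :=
  sInf ((fun y => binDist x y) '' S)

/-- `δ_j = (10 + 3 log₂ j)/(α j)`. -/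
def deltaSeq (α : ℝ) (j : ℕ) : ℝ := (10 + 3 * Real.logb 2 j) / (α * j)

/-- The drop `δ` as a function of the distance `r`: if `r = 2^{-j}` this equals
`δ_j = (10 + 3 log₂ j)/(α j)`, and `δ = 0` when `r = 0` (i.e. `δ_∞ = 0`). -/
def deltaOf (α : ℝ) (r : ℝ) : ℝ :=
  if r = 0 then 0
  else (10 + 3 * Real.logb 2 (-Real.logb 2 r)) / (α * (-Real.logb 2 r))

/-- `c_n = -∑_{j=n}^∞ 1/(2^{j+1} β_j)`. -/
def cseq (β : ℕ → ℝ) (n : ℕ) : ℝ :=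
  -∑' k : ℕ, 1 / (2 ^ (n + k + 1) * β (n + k))

/-- `φ_n(x) = c_n − δ_j` when `dist(x, X_n) = 2^{-j}` (and `φ_n = c_n` on `X_n`). -/
def phiN (α : ℝ) (c : ℕ → ℝ) (n : ℕ) (x : Bin) : ℝ :=
  c n - deltaOf α (distToSet x (Xsub n))

/-- The potential `φ = sup_{n ≥ 1} φ_n`. -/
def phi (α : ℝ) (c : ℕ → ℝ) (x : Bin) : ℝ :=
  ⨆ n : ℕ, phiN α c (n + 1) x

/-- The constants of the finite (truncated) construction:
`c_{n} = c_1 + ∑_{j=1}^{n-1} 1/(2^{j+1} β_j)`. -/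
def cseqFin (c1 : ℝ) (β : ℕ → ℝ) (n : ℕ) : ℝ :=
  c1 + ∑ j ∈ Finset.Ico 1 n, 1 / (2 ^ (j + 1) * β j)

/-- The truncated potential `φ = max{φ_n : 1 ≤ n ≤ N+1}`. -/
def phiFin (α : ℝ) (c : ℕ → ℝ) (N : ℕ) (x : Bin) : ℝ :=
  ⨆ n : Fin (N + 1), phiN α c ((n : ℕ) + 1) x

/-! ### Measures of maximal entropy and relative pressure -/

/-- `μ` is a measure of maximal entropy for the subsystem `Y` (a `T`-invariant
probability measure giving full mass to `Y` and maximizing entropy among such). -/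
def IsMaxEntropyOn (Y : Set Bin) (μ : Measure Bin) : Prop :=
  InvProb shift μ ∧ μ Y = 1 ∧
    ∀ ν : Measure Bin, InvProb shift ν → ν Y = 1 → kolSinai shift ν ≤ kolSinai shift μ

/-- The topological pressure of the subsystem `Y` (computed via the variational
principle over invariant measures giving full mass to `Y`). -/
def pressureOn (Y : Set Bin) (φ : Bin → ℝ) : ℝ :=
  ⨆ μ : {μ : Measure Bin // InvProb shift μ ∧ μ Y = 1},
    (kolSinai shift μ.1 + ∫ x, φ x ∂μ.1)

/-! ### The pin-sequence space -/

/-- `Y`, the closure of the union of the `X_n`, `n ≥ 1`. -/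
def Yset : Set Bin := closure (⋃ n : ℕ, Xsub (n + 1))

/-- The word `x_i ⋯ x_j` belongs to the language of `Y`. -/
def SegIn (x : Bin) (i j : ℤ) (Y : Set Bin) : Prop :=
  ∃ y ∈ Y, ∀ m : ℤ, i ≤ m → m ≤ j → y (m - i) = x m

/-- The word `x_0 ⋯ x_{j-1}` belongs to the language of `Y`. -/
def WordIn (x : Bin) (j : ℕ) (Y : Set Bin) : Prop :=
  ∃ y ∈ Y, ∀ m : ℕ, m < j → y (m : ℤ) = x (m : ℤ)

/-- The pin-sequence space `P ⊆ X × {0,1}^ℤ`: pinless stretches of `x` lie in the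
language of `Y`, and stretches between two pins do not. -/
def PinSpace : Set (Bin × Bin) :=
  {p | (∀ i j : ℤ, i < j → (∀ k : ℤ, i < k → k ≤ j → p.2 k = false) → SegIn p.1 i j Yset) ∧
       (∀ i j : ℤ, i < j → p.2 i = true → p.2 j = true → ¬ SegIn p.1 i j Yset)}

/-- The product shift `T̄(x,z) = (Tx, Tz)`. -/
def shift2 (p : Bin × Bin) : Bin × Bin := (shift p.1, shift p.2)

/-- The set `A = {(x,z) ∈ P : z_0 = 1}`. -/
def Aset : Set (Bin × Bin) := {p | p ∈ PinSpace ∧ p.2 0 = true}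

/-- The first return time to `A`. -/
def retTime (p : Bin × Bin) : ℕ :=
  sInf {k : ℕ | 1 ≤ k ∧ shift2^[k] p ∈ Aset}

/-- The induced (first-return) map `T̄_A`. -/
def inducedMap (p : Bin × Bin) : Bin × Bin := shift2^[retTime p] p

/-- `Q_j`, the set of points of `A` with first return time `j`. -/
def Qset (j : ℕ) : Set (Bin × Bin) := {p | p ∈ Aset ∧ retTime p = j}

/-- `Q_{j,s}` for `1 ≤ s ≤ ⌊log₂ j⌋ - 3`: points of `Q_j` whose initial block of
length `j` lies in the language of `X_s`; the class `s = 0` collects the blocks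
belonging to some `X_{s'}` with `s' ≥ ⌊log₂ j⌋ - 2`. -/
def Qjs (j s : ℕ) : Set (Bin × Bin) :=
  if s = 0 then
    {p | p ∈ Qset j ∧ ∃ s' : ℕ, 1 ≤ s' ∧ Nat.log 2 j - 2 ≤ s' ∧ WordIn p.1 j (Xsub s')}
  else {p | p ∈ Qset j ∧ WordIn p.1 j (Xsub s)}


/-! ### Auxiliary lemmas for continuity of φ -/

lemma binDist_nonneg (x y : Bin) : 0 ≤ binDist x y := by
  unfold binDist
  split_ifs with h
  · exact le_refl 0
  · positivity

lemma binDist_le_half (x y : Bin) (h : x 0 = y 0) : binDist x y ≤ 1 / 2 := by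
  unfold binDist
  split_ifs with hxy
  · norm_num
  · have hS : {m : ℕ | ∃ i : ℤ, i.natAbs = m ∧ x i ≠ y i}.Nonempty := by
      obtain ⟨i, hi⟩ := Function.ne_iff.mp hxy
      exact ⟨i.natAbs, i, rfl, hi⟩
    have h1 : 1 ≤ sInf {m : ℕ | ∃ i : ℤ, i.natAbs = m ∧ x i ≠ y i} := by
      by_contra hlt
      push_neg at hlt
      interval_cases h0 : sInf {m : ℕ | ∃ i : ℤ, i.natAbs = m ∧ x i ≠ y i}
      · obtain ⟨i, hi0, hine⟩ := h0 ▸ Nat.sInf_mem hS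
        have : i = 0 := Int.natAbs_eq_zero.mp hi0
        exact hine (this ▸ h)
    calc ((1:ℝ)/2) ^ sInf {m : ℕ | ∃ i : ℤ, i.natAbs = m ∧ x i ≠ y i}
        ≤ (1/2) ^ 1 := pow_le_pow_of_le_one (by norm_num) (by norm_num) h1
      _ = 1/2 := pow_one _

/-- A periodic point built from a single word. -/
def perPoint (w : List Bool) : Bin := fun i => w.getD (i % (w.length : ℤ)).toNat false

lemma perPoint_spec (w : List Bool) (hw : 0 < w.length) (k : ℤ) (i : ℕ) (h : i < w.length) :
    perPoint w (k * w.length + (i : ℤ)) = w.get ⟨i, h⟩ := by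
  have hL : (0:ℤ) < (w.length : ℤ) := by exact_mod_cast hw
  have hmod : (k * (w.length : ℤ) + (i : ℤ)) % (w.length : ℤ) = (i : ℤ) := by
    rw [add_comm, mul_comm, Int.add_mul_emod_self_left]
    exact Int.emod_eq_of_lt (by positivity) (by exact_mod_cast h)
  unfold perPoint
  rw [hmod]
  simp only [Int.toNat_natCast]
  rw [List.getD_eq_getElem w false h]
  simp [List.get_eq_getElem]

lemma perPoint_mem_coded (W : Set (List Bool)) (w : List Bool) (hw : w ∈ W)
    (hpos : 0 < w.length) : perPoint w ∈ codedSystem W := by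
  apply subset_closure
  have hL : (0:ℤ) < (w.length : ℤ) := by exact_mod_cast hpos
  refine ⟨fun k => k * w.length, ?_, ?_, ?_, ?_⟩
  · intro a b hab
    exact mul_lt_mul_of_pos_right hab hL
  · intro N
    refine ⟨max N 0 + 1, ?_⟩
    show N < (max N 0 + 1) * (w.length : ℤ)
    have h1 : (1:ℤ) ≤ max N 0 + 1 := by
      have := le_max_right N 0; omega
    have : max N 0 + 1 ≤ (max N 0 + 1) * w.length :=
      le_mul_of_one_le_right (by omega) hL
    have := le_max_left N 0
    omega
  · intro N
    refine ⟨min N 0 - 1, ?_⟩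
    show (min N 0 - 1) * (w.length : ℤ) < N
    have h1 : min N 0 - 1 ≤ 0 := by
      have := min_le_right N 0; omega
    have : (min N 0 - 1) * w.length ≤ (min N 0 - 1) * 1 :=
      mul_le_mul_of_nonpos_left (by exact_mod_cast hpos) h1
    have := min_le_left N 0
    omega
  · intro k
    refine ⟨w, hw, by ring, fun i h => perPoint_spec w hpos k i h⟩

lemma exists_mem_Xsub_aux (n : ℕ) (w : List Bool) (hwmem : w ∈ genWords n)
    (hlen : 0 < w.length) : ∃ y ∈ Xsub n, y 0 = w.get ⟨0, hlen⟩ := by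
  refine ⟨perPoint w, perPoint_mem_coded _ w hwmem hlen, ?_⟩
  have h0 : perPoint w ((0:ℤ) * w.length + ((0:ℕ):ℤ)) = w.get ⟨0, hlen⟩ :=
    perPoint_spec w hlen 0 0 hlen
  have hz : ((0:ℤ) * w.length + ((0:ℕ):ℤ)) = 0 := by simp
  rw [hz] at h0
  exact h0

lemma head_replicate_append (m : ℕ) (hm : 0 < m) (c d : Bool)
    (h : 0 < (List.replicate m c ++ [d]).length) :
    (List.replicate m c ++ [d]).get ⟨0, h⟩ = c := by
  rw [List.get_eq_getElem]
  rw [List.getElem_append_left (by simpa using hm)]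
  simp

lemma exists_mem_Xsub (n : ℕ) (hn : 1 ≤ n) (b : Bool) : ∃ y ∈ Xsub n, y 0 = b := by
  have h2 : 2 ≤ 2 ^ n := by
    calc 2 = 2 ^ 1 := rfl
    _ ≤ 2 ^ n := Nat.pow_le_pow_right (by norm_num) hn
  have hm : 0 < 2 ^ n - 1 := by omega
  cases b
  · have hwmem : List.replicate (2 ^ n - 1) false ++ [true] ∈ genWords n := by
      simp [genWords]
    have hlen : 0 < (List.replicate (2 ^ n - 1) false ++ [true]).length := by simp
    obtain ⟨y, hy, hy0⟩ := exists_mem_Xsub_aux n _ hwmem hlen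
    exact ⟨y, hy, by rw [hy0, head_replicate_append _ hm]⟩
  · have hwmem : List.replicate (2 ^ n - 1) true ++ [false] ∈ genWords n := by
      simp [genWords]
    have hlen : 0 < (List.replicate (2 ^ n - 1) true ++ [false]).length := by simp
    obtain ⟨y, hy, hy0⟩ := exists_mem_Xsub_aux n _ hwmem hlen
    exact ⟨y, hy, by rw [hy0, head_replicate_append _ hm]⟩

lemma Xsub_nonempty (n : ℕ) (hn : 1 ≤ n) : (Xsub n).Nonempty := by
  obtain ⟨y, hy, -⟩ := exists_mem_Xsub n hn false
  exact ⟨y, hy⟩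

lemma distToSet_nonneg (x : Bin) (S : Set Bin) : 0 ≤ distToSet x S := by
  apply Real.sInf_nonneg
  rintro a ⟨z, -, rfl⟩
  exact binDist_nonneg x z

lemma distToSet_le_half (x : Bin) (n : ℕ) (hn : 1 ≤ n) :
    distToSet x (Xsub n) ≤ 1 / 2 := by
  obtain ⟨y, hy, hy0⟩ := exists_mem_Xsub n hn (x 0)
  have hb : binDist x y ≤ 1 / 2 := binDist_le_half x y hy0.symm
  refine le_trans (csInf_le ⟨0, ?_⟩ ⟨y, hy, rfl⟩) hb
  rintro a ⟨z, -, rfl⟩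
  exact binDist_nonneg x z

lemma binDist_eq_or_small {x y : Bin} (k : ℕ)
    (hagree : ∀ i : ℤ, i.natAbs ≤ k → x i = y i) (z : Bin) :
    binDist x z = binDist y z ∨
      (binDist x z ≤ (1/2) ^ (k + 1) ∧ binDist y z ≤ (1/2) ^ (k + 1)) := by
  classical
  set Sx := {m : ℕ | ∃ i : ℤ, i.natAbs = m ∧ x i ≠ z i} with hSx
  set Sy := {m : ℕ | ∃ i : ℤ, i.natAbs = m ∧ y i ≠ z i} with hSy
  by_cases hxz : x = z
  · by_cases hyz : y = z
    · left; rw [hxz, hyz]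
    · right
      constructor
      · unfold binDist; rw [if_pos hxz]; positivity
      · unfold binDist; rw [if_neg hyz]
        have hne : Sy.Nonempty := by
          obtain ⟨i, hi⟩ := Function.ne_iff.mp hyz
          exact ⟨i.natAbs, i, rfl, hi⟩
        have hk1 : k + 1 ≤ sInf Sy := by
          apply le_csInf hne
          rintro m ⟨i, rfl, hine⟩
          by_contra hle
          push_neg at hle
          exact hine (((hagree i (by omega)).symm.trans (congrFun hxz i)))
        exact pow_le_pow_of_le_one (by norm_num) (by norm_num) hk1
  · have hnex : Sx.Nonempty := by
      obtain ⟨i, hi⟩ := Function.ne_iff.mp hxz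
      exact ⟨i.natAbs, i, rfl, hi⟩
    obtain ⟨i₁, hi₁, hne₁⟩ := Nat.sInf_mem hnex
    by_cases hm : sInf Sx ≤ k
    · left
      have hik : i₁.natAbs ≤ k := hi₁ ▸ hm
      have hyz : y ≠ z := by
        intro hyz
        exact hne₁ ((hagree i₁ hik).trans (congrFun hyz i₁))
      have hmemy : sInf Sx ∈ Sy := ⟨i₁, hi₁, fun h => hne₁ ((hagree i₁ hik).trans h)⟩
      have heq : sInf Sy = sInf Sx := by
        apply le_antisymm (Nat.sInf_le hmemy)
        apply le_csInf ⟨_, hmemy⟩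
        rintro m ⟨i, rfl, hine⟩
        by_contra hlt
        push_neg at hlt
        have : i.natAbs ∈ Sx := ⟨i, rfl, fun h => hine ((hagree i (by omega)).symm.trans h)⟩
        exact absurd (Nat.sInf_le this) (by omega)
      unfold binDist
      rw [if_neg hxz, if_neg hyz, heq]
    · right
      push_neg at hm
      constructor
      · unfold binDist; rw [if_neg hxz]
        exact pow_le_pow_of_le_one (by norm_num) (by norm_num) hm
      · by_cases hyz : y = z
        · unfold binDist; rw [if_pos hyz]; positivity
        · unfold binDist; rw [if_neg hyz]
          have hne : Sy.Nonempty := by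
            obtain ⟨i, hi⟩ := Function.ne_iff.mp hyz
            exact ⟨i.natAbs, i, rfl, hi⟩
          have hk1 : k + 1 ≤ sInf Sy := by
            apply le_csInf hne
            rintro m ⟨i, rfl, hine⟩
            by_contra hle
            push_neg at hle
            have : i.natAbs ∈ Sx :=
              ⟨i, rfl, fun h => hine ((hagree i (by omega)).symm.trans h)⟩
            exact absurd (Nat.sInf_le this) (by omega)
          exact pow_le_pow_of_le_one (by norm_num) (by norm_num) hk1

lemma distToSet_eq_or_small {x y : Bin} (k : ℕ)
    (hagree : ∀ i : ℤ, i.natAbs ≤ k → x i = y i) (S : Set Bin) :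
    distToSet x S = distToSet y S ∨
      (distToSet x S ≤ (1/2) ^ (k + 1) ∧ distToSet y S ≤ (1/2) ^ (k + 1)) := by
  have hbdd : ∀ u : Bin, BddBelow ((fun z => binDist u z) '' S) := by
    intro u
    refine ⟨0, ?_⟩
    rintro a ⟨z, -, rfl⟩
    exact binDist_nonneg u z
  by_cases hex : ∃ z ∈ S, binDist x z ≤ (1/2) ^ (k + 1)
  · right
    obtain ⟨z, hz, hzd⟩ := hex
    have hy : binDist y z ≤ (1/2) ^ (k + 1) := by
      rcases binDist_eq_or_small k hagree z with h | ⟨-, h⟩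
      · exact h ▸ hzd
      · exact h
    exact ⟨le_trans (csInf_le (hbdd x) ⟨z, hz, rfl⟩) hzd,
      le_trans (csInf_le (hbdd y) ⟨z, hz, rfl⟩) hy⟩
  · left
    push_neg at hex
    unfold distToSet
    congr 1
    apply Set.image_congr
    intro z hz
    rcases binDist_eq_or_small k hagree z with h | ⟨h, -⟩
    · exact h
    · exact absurd h (not_le.mpr (hex z hz))

lemma logb_half_pow (k : ℕ) : Real.logb 2 ((1/2 : ℝ) ^ k) = -(k : ℝ) := by
  rw [Real.logb_pow, one_div, Real.logb_inv, Real.logb_self_eq_one (by norm_num)]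
  ring

lemma deltaOf_nonneg {α : ℝ} (hα : 0 < α) {r : ℝ} (h0 : 0 ≤ r) (h2 : r ≤ 1 / 2) :
    0 ≤ deltaOf α r := by
  unfold deltaOf
  split_ifs with h
  · exact le_refl 0
  · have hr : 0 < r := lt_of_le_of_ne h0 (Ne.symm h)
    have hlog : Real.logb 2 r ≤ Real.logb 2 (1/2 : ℝ) :=
      Real.logb_le_logb_of_le (by norm_num) hr h2
    have hhalf : Real.logb 2 (1/2 : ℝ) = -1 := by
      rw [one_div, Real.logb_inv, Real.logb_self_eq_one (by norm_num)]
    have ht : 1 ≤ -Real.logb 2 r := by rw [hhalf] at hlog; linarith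
    have hnum : 0 ≤ Real.logb 2 (-Real.logb 2 r) := Real.logb_nonneg (by norm_num) ht
    apply div_nonneg (by linarith)
    have : (0:ℝ) < -Real.logb 2 r := by linarith
    positivity

lemma tendsto_deltaFun {α : ℝ} (hα : 0 < α) :
    Filter.Tendsto (fun t : ℝ => (10 + 3 * Real.logb 2 t) / (α * t))
      Filter.atTop (𝓝 0) := by
  have h1 : Filter.Tendsto (fun t : ℝ => Real.log t / t) Filter.atTop (𝓝 0) :=
    Real.isLittleO_log_id_atTop.tendsto_div_nhds_zero
  have h2 : Filter.Tendsto (fun t : ℝ => 10 / (α * t)) Filter.atTop (𝓝 0) := by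
    apply Filter.Tendsto.div_atTop (tendsto_const_nhds)
    exact (Filter.tendsto_id.const_mul_atTop hα)
  have h3 : Filter.Tendsto (fun t : ℝ => (Real.log t / t) * (3 / (Real.log 2 * α)))
      Filter.atTop (𝓝 0) := by
    simpa using h1.mul_const (3 / (Real.log 2 * α))
  have h4 := h2.add h3
  rw [add_zero] at h4
  apply h4.congr'
  filter_upwards [Filter.eventually_ge_atTop (1:ℝ)] with t ht
  have ht0 : t ≠ 0 := by linarith
  have hl2 : Real.log 2 ≠ 0 := by
    have := Real.log_pos (by norm_num : (1:ℝ) < 2); linarith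
  rw [Real.logb]
  field_simp

lemma exists_goodK {α ε : ℝ} (hα : 0 < α) (hε : 0 < ε) :
    ∃ k : ℕ, ∀ r : ℝ, 0 ≤ r → r ≤ (1/2) ^ (k + 1) → deltaOf α r ≤ ε := by
  have hev := (tendsto_deltaFun hα).eventually_lt_const hε
  obtain ⟨K, hK⟩ := Filter.eventually_atTop.mp hev
  obtain ⟨k, hk⟩ := exists_nat_ge K
  refine ⟨k, fun r h0 h2 => ?_⟩
  rcases eq_or_lt_of_le h0 with h | hr
  · subst h
    simp only [deltaOf, if_pos rfl]
    exact le_of_lt hε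
  · unfold deltaOf
    rw [if_neg (ne_of_gt hr)]
    have hlog : Real.logb 2 r ≤ Real.logb 2 ((1/2 : ℝ) ^ (k + 1)) :=
      Real.logb_le_logb_of_le (by norm_num) hr h2
    rw [logb_half_pow] at hlog
    have ht : K ≤ -Real.logb 2 r := by
      push_cast at hlog ⊢
      nlinarith [hk]
    exact le_of_lt (hK _ ht)

lemma cseq_nonpos {β : ℕ → ℝ} (hpos : ∀ n : ℕ, 1 ≤ n → 0 < β n) (n : ℕ) (hn : 1 ≤ n) :
    cseq β n ≤ 0 := by
  unfold cseq
  rw [neg_nonpos]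
  apply tsum_nonneg
  intro k
  have : 0 < β (n + k) := hpos _ (by omega)
  positivity

lemma phiN_nonpos {α : ℝ} {β : ℕ → ℝ} (hα : 0 < α)
    (hpos : ∀ n : ℕ, 1 ≤ n → 0 < β n) (n : ℕ) (hn : 1 ≤ n) (x : Bin) :
    phiN α (cseq β) n x ≤ 0 := by
  unfold phiN
  have h1 := cseq_nonpos hpos n hn
  have h2 : 0 ≤ deltaOf α (distToSet x (Xsub n)) :=
    deltaOf_nonneg hα (distToSet_nonneg x _) (distToSet_le_half x n hn)
  linarith

lemma phiN_close {α : ℝ} {c : ℕ → ℝ} {ε : ℝ} (hα : 0 < α) (hε : 0 ≤ ε) {k : ℕ}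
    (hk : ∀ r : ℝ, 0 ≤ r → r ≤ (1/2) ^ (k + 1) → deltaOf α r ≤ ε)
    {x y : Bin} (hagree : ∀ i : ℤ, i.natAbs ≤ k → x i = y i) (n : ℕ) :
    |phiN α c n x - phiN α c n y| ≤ ε := by
  rcases distToSet_eq_or_small k hagree (Xsub n) with h | ⟨h1, h2⟩
  · unfold phiN
    rw [h]
    simpa using hε
  · have hhalf : ((1:ℝ)/2) ^ (k + 1) ≤ 1/2 := by
      calc ((1:ℝ)/2) ^ (k + 1) ≤ (1/2) ^ 1 :=
        pow_le_pow_of_le_one (by norm_num) (by norm_num) (by omega)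
      _ = 1/2 := pow_one _
    have d0x := distToSet_nonneg x (Xsub n)
    have d0y := distToSet_nonneg y (Xsub n)
    have ax0 : 0 ≤ deltaOf α (distToSet x (Xsub n)) :=
      deltaOf_nonneg hα d0x (le_trans h1 hhalf)
    have ay0 : 0 ≤ deltaOf α (distToSet y (Xsub n)) :=
      deltaOf_nonneg hα d0y (le_trans h2 hhalf)
    have ax1 : deltaOf α (distToSet x (Xsub n)) ≤ ε := hk _ d0x h1
    have ay1 : deltaOf α (distToSet y (Xsub n)) ≤ ε := hk _ d0y h2
    unfold phiN
    rw [abs_sub_le_iff]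
    constructor <;> linarith

lemma abs_ciSup_sub_le {f g : ℕ → ℝ} {ε : ℝ}
    (hf : BddAbove (Set.range f)) (hg : BddAbove (Set.range g))
    (h : ∀ n, |f n - g n| ≤ ε) :
    |(⨆ n, f n) - (⨆ n, g n)| ≤ ε := by
  rw [abs_sub_le_iff]
  constructor
  · have : (⨆ n, f n) ≤ (⨆ n, g n) + ε := by
      apply ciSup_le
      intro n
      have h1 := (abs_sub_le_iff.mp (h n)).1
      have h2 := le_ciSup hg n
      linarith
    linarith
  · have : (⨆ n, g n) ≤ (⨆ n, f n) + ε := by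
      apply ciSup_le
      intro n
      have h1 := (abs_sub_le_iff.mp (h n)).2
      have h2 := le_ciSup hf n
      linarith
    linarith

/-- continuity of the potential `φ = sup_n φ_n`. -/
theorem phi_continuous (α : ℝ) (β : ℕ → ℝ) (hα : 0 < α) (hαβ : α < β 1)
    (hpos : ∀ n : ℕ, 1 ≤ n → 0 < β n)
    (hmono : ∀ m n : ℕ, 1 ≤ m → m < n → β m < β n) :
    Continuous (phi α (cseq β)) := by
  rw [continuous_iff_continuousAt]
  intro x
  rw [ContinuousAt, Metric.tendsto_nhds]
  intro ε hε
  obtain ⟨k, hk⟩ := exists_goodK hα (half_pos hε)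
  have hev : ∀ᶠ y in 𝓝 x, ∀ i ∈ Finset.Icc (-(k:ℤ)) (k:ℤ), y i = x i := by
    rw [Filter.eventually_all_finset]
    intro i _
    have hopen : IsOpen {y : Bin | y i = x i} := by
      have h : {y : Bin | y i = x i} = (fun y : Bin => y i) ⁻¹' {x i} := rfl
      rw [h]
      exact (isOpen_discrete _).preimage (continuous_apply i)
    exact Filter.eventually_of_mem (hopen.mem_nhds rfl) (fun y hy => hy)
  filter_upwards [hev] with y hy
  have hagree : ∀ i : ℤ, i.natAbs ≤ k → y i = x i := by
    intro i hi
    exact hy i (Finset.mem_Icc.mpr (by omega))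
  have hb1 : BddAbove (Set.range fun n : ℕ => phiN α (cseq β) (n + 1) y) := by
    refine ⟨0, ?_⟩
    rintro a ⟨n, rfl⟩
    exact phiN_nonpos hα hpos (n + 1) (by omega) y
  have hb2 : BddAbove (Set.range fun n : ℕ => phiN α (cseq β) (n + 1) x) := by
    refine ⟨0, ?_⟩
    rintro a ⟨n, rfl⟩
    exact phiN_nonpos hα hpos (n + 1) (by omega) x
  have hclose : ∀ n : ℕ, |phiN α (cseq β) (n + 1) y - phiN α (cseq β) (n + 1) x| ≤ ε / 2 :=
    fun n => phiN_close hα (le_of_lt (half_pos hε)) hk hagree (n + 1)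
  have hmain := abs_ciSup_sub_le hb1 hb2 hclose
  rw [Real.dist_eq]
  unfold phi
  calc |(⨆ n : ℕ, phiN α (cseq β) (n + 1) y) - ⨆ n : ℕ, phiN α (cseq β) (n + 1) x|
      ≤ ε / 2 := hmain
    _ < ε := by linarith

end PhaseTransitions
end
end

section
/- For each n∈ℕ, the coded subshift X_n of the full two-shift generated by the two words of length 2^n, W_n={0^{2^n−1}1, 1^{2^n−1}0}, has topological entropy h_top(X_n,T)=2^{-n}. -/
open MeasureTheory Real Filter Topology

noncomputable section

namespace PhaseTransitions

/-!
A point of the coded system generated by a set `W` of `k` words of common length `L` is, on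
any finite window, a free concatenation of words of `W` cut at an arithmetic progression of
difference `L`. So a word of length `m` of its language is determined by a phase `r < L` and
the `⌊m/L⌋ + 2` words covering it, while the `k ^ ⌊m/L⌋` concatenations aligned at `0` are
pairwise distinct. Hence `log₂ #L_m = m log₂ k / L + O(1)` and the entropy is `log₂ k / L`;
for `W_n` we have `k = 2` and `L = 2^n`.
-/

lemma exists_eqOn_of_mem_closure {ι α : Type*} [TopologicalSpace α] [DiscreteTopology α]
    {S : Set (ι → α)} {x : ι → α} (hx : x ∈ closure S) {I : Set ι} (hI : I.Finite) :
    ∃ y ∈ S, Set.EqOn y x I := by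
  have hopen : IsOpen (I.pi fun i => ({x i} : Set α)) :=
    isOpen_set_pi hI fun _ _ => isOpen_discrete _
  obtain ⟨y, hyx, hyS⟩ := mem_closure_iff.mp hx _ hopen fun _ _ => rfl
  exact ⟨y, hyS, hyx⟩

lemma tendsto_div_natCast_of_abs_sub_mul_le {f : ℕ → ℝ} {a C : ℝ}
    (h : ∀ m : ℕ, |f m - m * a| ≤ C) :
    Tendsto (fun m : ℕ => f m / m) atTop (𝓝 a) := by
  have hzero : Tendsto (fun m : ℕ => (f m - m * a) / m) atTop (𝓝 0) :=
    squeeze_zero_norm (fun m => by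
      rw [Real.norm_eq_abs, abs_div, Nat.abs_cast]
      exact div_le_div_of_nonneg_right (h m) m.cast_nonneg)
      (tendsto_const_div_atTop_nhds_zero_nat C)
  refine (zero_add a ▸ hzero.add_const a).congr' ?_
  filter_upwards [eventually_ne_atTop 0] with m hm
  field_simp
  ring

section BlockConcat

variable {L : ℕ}

/-- The point whose block `[k L, (k + 1) L)` spells out the word `c k`. -/
def blockConcat (L : ℕ) (c : ℤ → List Bool) : Bin :=
  fun i => (c (i / L)).getD (i % L).toNat false

lemma blockConcat_mul_add (c : ℤ → List Bool) (k : ℤ) {j : ℕ} (hj : j < L) :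
    blockConcat L c (k * L + j) = (c k).getD j false := by
  obtain ⟨hdiv, hmod⟩ := (Int.ediv_emod_unique (a := k * L + j) (b := L) (q := k) (r := j)
    (by omega)).mpr ⟨by ring, by omega, by omega⟩
  simp only [blockConcat, hdiv, hmod, Int.toNat_natCast]

lemma blockConcat_add_mul (hL : 0 < L) (c : ℤ → List Bool) (i q : ℤ) :
    blockConcat L c (i + q * L) = blockConcat L (fun k => c (k + q)) i := by
  simp only [blockConcat, Int.add_mul_ediv_right _ _ (by omega : (L : ℤ) ≠ 0),
    Int.add_mul_emod_self_right]

lemma blockConcat_natCast (c : ℤ → List Bool) (j : ℕ) :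
    blockConcat L c j = (c (j / L : ℕ)).getD (j % L) false := by
  simp only [blockConcat, Int.natCast_div, ← Int.natCast_mod, Int.toNat_natCast]

variable {W : Set (List Bool)}

lemma blockConcat_mem_codedSystem (hL : 0 < L) (hW : ∀ w ∈ W, w.length = L)
    {c : ℤ → List Bool} (hc : ∀ k, c k ∈ W) : blockConcat L c ∈ codedSystem W := by
  have hL' : (1 : ℤ) ≤ L := by exact_mod_cast hL
  refine subset_closure ⟨fun k => k * L, fun a b hab => by nlinarith,
    fun N => ⟨|N| + 1, by nlinarith [le_abs_self N, abs_nonneg N]⟩,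
    fun N => ⟨-(|N| + 1), by nlinarith [neg_abs_le N, abs_nonneg N]⟩,
    fun k => ⟨c k, hc k, by rw [hW _ (hc k)]; ring, fun i hi => ?_⟩⟩
  rw [List.get_eq_getElem, ← List.getD_eq_getElem _ false,
    blockConcat_mul_add c k (hW _ (hc k) ▸ hi)]

/-- The cut points of a free concatenation of words of length `L` form an arithmetic
progression of difference `L`. -/
lemma IsFreeConcat.exists_blockConcat (hL : 0 < L) (hW : ∀ w ∈ W, w.length = L)
    {x : Bin} (hx : IsFreeConcat W x) :
    ∃ c : ℤ → List Bool, (∀ k, c k ∈ W) ∧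
      ∃ r : ℕ, r < L ∧ ∀ i : ℤ, x i = blockConcat L c (i + r) := by
  obtain ⟨t, -, -, -, hblock⟩ := hx
  choose w hw hstep hval using hblock
  have hstep' : ∀ k, t (k + 1) = t k + L := fun k => by rw [hstep, hW _ (hw k)]
  have ht : ∀ k, t k = t 0 + k * L := by
    intro k
    induction k using Int.induction_on with
    | zero => simp
    | succ k ih => rw [hstep', ih]; ring
    | pred k ih =>
      have := hstep' (-k - 1)
      rw [sub_add_cancel, ih] at this
      linarith
  have hLz : (0 : ℤ) < L := by exact_mod_cast hL
  have hx : ∀ i, x i = blockConcat L w (i - t 0) := by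
    intro i
    set j := ((i - t 0) % L).toNat with hj
    have hjL : j < (w ((i - t 0) / L)).length := by
      rw [hW _ (hw _)]; have := Int.emod_lt_of_pos (i - t 0) hLz; omega
    have hi : i = t ((i - t 0) / L) + j := by
      rw [ht, hj, Int.toNat_of_nonneg (Int.emod_nonneg _ hLz.ne')]
      linarith [Int.mul_ediv_add_emod (i - t 0) L]
    rw [congrArg x hi, hval _ j hjL, List.get_eq_getElem, ← List.getD_eq_getElem _ false]
    rfl
  have hr : 0 ≤ -t 0 % L := Int.emod_nonneg _ hLz.ne'
  refine ⟨fun k => w (k + -t 0 / L), fun k => hw _, (-t 0 % L).toNat, ?_, fun i => ?_⟩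
  · have := Int.emod_lt_of_pos (-t 0) hLz; omega
  · rw [hx, Int.toNat_of_nonneg hr, ← blockConcat_add_mul hL]
    congr 1
    linarith [Int.mul_ediv_add_emod (-t 0) L]

theorem card_langWord_codedSystem_le (hL : 0 < L) (hW : ∀ w ∈ W, w.length = L) (m : ℕ) :
    Nat.card (langWord (codedSystem W) m) ≤ L * Nat.card W ^ (m / L + 2) := by
  have : Finite W := ((List.finite_length_eq Bool L).subset hW).to_subtype
  have hB : ∀ (i : Fin m) (r : Fin L), ((i + r : ℕ)) / L < m / L + 2 := fun i r => by
    rw [Nat.div_lt_iff_lt_mul hL, add_mul]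
    have := Nat.lt_div_mul_add (a := m) hL
    omega
  let decode : Fin L × (Fin (m / L + 2) → W) → Fin m → Bool :=
    fun p i => (p.2 ⟨_, hB i p.1⟩ : List Bool).getD ((i + p.1 : ℕ) % L) false
  have hsub : langWord (codedSystem W) m ⊆ Set.range decode := by
    rintro v ⟨x, hx, hxv⟩
    obtain ⟨y, hy, hyx⟩ := exists_eqOn_of_mem_closure hx (Set.finite_Ico (0 : ℤ) m)
    obtain ⟨c, hc, r, hr, hyc⟩ := IsFreeConcat.exists_blockConcat hL hW hy
    refine ⟨(⟨r, hr⟩, fun k => ⟨c k, hc k⟩), funext fun i => ?_⟩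
    have hi : ((i : ℕ) : ℤ) ∈ Set.Ico (0 : ℤ) m := ⟨by positivity, by exact_mod_cast i.2⟩
    rw [← hxv i, ← hyx hi, hyc, ← Nat.cast_add, blockConcat_natCast]
  calc Nat.card (langWord (codedSystem W) m)
      ≤ Nat.card (Set.range decode) := Nat.card_mono (Set.finite_range _) hsub
    _ ≤ Nat.card (Fin L × (Fin (m / L + 2) → W)) := Finite.card_range_le _
    _ = L * Nat.card W ^ (m / L + 2) := by simp [Nat.card_prod, Nat.card_fun]

theorem pow_le_card_langWord_codedSystem (hL : 0 < L) (hW : ∀ w ∈ W, w.length = L)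
    {w₀ : List Bool} (hw₀ : w₀ ∈ W) (m : ℕ) :
    Nat.card W ^ (m / L) ≤ Nat.card (langWord (codedSystem W) m) := by
  let index : Fin (m / L) → ℤ := fun k => ((k : ℕ) : ℤ)
  have hindex : Function.Injective index := fun a b h => Fin.ext (Nat.cast_injective h)
  let blocks (d : Fin (m / L) → W) : ℤ → List Bool :=
    Function.extend index (fun k => (d k : List Bool)) fun _ => w₀
  have hblocks : ∀ d k, blocks d k ∈ W := fun d k => by
    simp only [blocks, Function.extend]
    split_ifs
    exacts [(d _).2, hw₀]
  have hblocks_index : ∀ d (k : Fin (m / L)), blocks d k = d k := fun d => hindex.extend_apply _ _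
  let encode (d : Fin (m / L) → W) : langWord (codedSystem W) m :=
    ⟨fun i => blockConcat L (blocks d) i, _, blockConcat_mem_codedSystem hL hW (hblocks d),
      fun _ => rfl⟩
  have hencode : Function.Injective encode := by
    intro d d' h
    funext k
    refine Subtype.ext (List.ext_getElem (by rw [hW _ (d k).2, hW _ (d' k).2]) fun j hj hj' => ?_)
    have hjL : j < L := hW _ (d k).2 ▸ hj
    have hpos : (k : ℕ) * L + j < m := by
      have := Nat.div_mul_le_self m L
      nlinarith [k.2]
    have hkj := congrFun (congrArg Subtype.val h) ⟨_, hpos⟩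
    simp only [encode, Nat.cast_add, Nat.cast_mul, blockConcat_mul_add _ _ hjL] at hkj
    rwa [hblocks_index, hblocks_index, List.getD_eq_getElem _ _ hj,
      List.getD_eq_getElem _ _ hj'] at hkj
  calc Nat.card W ^ (m / L) = Nat.card (Fin (m / L) → W) := by simp [Nat.card_fun]
    _ ≤ Nat.card (langWord (codedSystem W) m) := Nat.card_le_card_of_injective _ hencode

lemma abs_logb_card_langWord_codedSystem_sub_le (hL : 0 < L) (hW : ∀ w ∈ W, w.length = L)
    (hne : W.Nonempty) (m : ℕ) :
    |logb 2 (Nat.card (langWord (codedSystem W) m)) - m * (logb 2 (Nat.card W) / L)|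
      ≤ logb 2 L + 2 * logb 2 (Nat.card W) := by
  obtain ⟨w₀, hw₀⟩ := hne
  have : Finite W := ((List.finite_length_eq Bool L).subset hW).to_subtype
  have : Nonempty W := ⟨⟨w₀, hw₀⟩⟩
  set k := Nat.card W
  set N := Nat.card (langWord (codedSystem W) m)
  have hk : (1 : ℝ) ≤ k := by exact_mod_cast Nat.card_pos
  have hlow : ((k : ℝ) ^ (m / L)) ≤ N := by
    exact_mod_cast pow_le_card_langWord_codedSystem hL hW hw₀ m
  have hup : (N : ℝ) ≤ L * (k : ℝ) ^ (m / L + 2) := by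
    exact_mod_cast card_langWord_codedSystem_le hL hW m
  have hpow : (0 : ℝ) < (k : ℝ) ^ (m / L) := by positivity
  have h1 : ((m / L : ℕ) : ℝ) * logb 2 k ≤ logb 2 N := by
    rw [← logb_pow]; exact logb_le_logb_of_le one_lt_two hpow hlow
  have h2 : logb 2 N ≤ logb 2 L + ((m / L + 2 : ℕ) : ℝ) * logb 2 k := by
    rw [← logb_pow, ← logb_mul (by positivity) (by positivity)]
    exact logb_le_logb_of_le one_lt_two (hpow.trans_le hlow) hup
  have hq1 : (m : ℝ) / L - 1 ≤ ((m / L : ℕ) : ℝ) := by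
    rw [← Nat.floor_div_eq_div (K := ℝ)]; exact (Nat.sub_one_lt_floor _).le
  have hq2 : ((m / L : ℕ) : ℝ) ≤ m / L := Nat.cast_div_le
  have hlogk : 0 ≤ logb 2 k := logb_nonneg one_lt_two hk
  have hlogL : 0 ≤ logb 2 L := logb_nonneg one_lt_two (by exact_mod_cast hL)
  have hm : (m : ℝ) * (logb 2 k / L) = (m / L) * logb 2 k := by ring
  push_cast at h2
  rw [abs_le, hm]
  constructor <;>
    linarith [mul_le_mul_of_nonneg_right hq1 hlogk, mul_le_mul_of_nonneg_right hq2 hlogk]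

theorem tendsto_logb_card_langWord_codedSystem (hL : 0 < L) (hW : ∀ w ∈ W, w.length = L)
    (hne : W.Nonempty) :
    Tendsto (fun m : ℕ => logb 2 (Nat.card (langWord (codedSystem W) m)) / m)
      atTop (𝓝 (logb 2 (Nat.card W) / L)) :=
  tendsto_div_natCast_of_abs_sub_mul_le (abs_logb_card_langWord_codedSystem_sub_le hL hW hne)

end BlockConcat

lemma length_eq_of_mem_genWords {n : ℕ} {w : List Bool} (hw : w ∈ genWords n) :
    w.length = 2 ^ n := by
  have := Nat.one_le_two_pow (n := n)
  rcases hw with rfl | rfl <;> simp <;> omega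

lemma card_genWords (n : ℕ) : Nat.card (genWords n) = 2 := by
  rw [Nat.card_coe_set_eq, genWords, Set.ncard_pair (by simp)]

/-- `h_top(X_n) = 2^{-n}`. -/
theorem Xsub_entropy (n : ℕ) :
    Tendsto (fun m : ℕ => Real.logb 2 (Nat.card (langWord (Xsub n) m)) / m)
      atTop (𝓝 ((1 / 2 : ℝ) ^ n)) := by
  have hlimit : (1 / 2 : ℝ) ^ n = logb 2 (Nat.card (genWords n)) / ((2 ^ n : ℕ) : ℝ) := by
    rw [card_genWords]
    simp
  rw [hlimit]
  exact tendsto_logb_card_langWord_codedSystem Nat.one_le_two_pow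
    (fun _ => length_eq_of_mem_genWords) ⟨_, Or.inl rfl⟩

end PhaseTransitions
end
end
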